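/- For every finite nonconstant Blaschke product B, the multiplication operator T_B on the Bergman space A_{−1} has a nontrivial closed hyperinvariant subspace: there exists a closed subspace M of A_{−1} with M ≠ {0} and M ≠ A_{−1} such that A(M) ⊆ M for every bounded linear operator A on A_{−1} satisfying A T_B = T_B A. -/

import Mathlib

open Complex Metric Filter

noncomputable section

/-- The open unit disc in `ℂ`. -/
def unitDisc : Set ℂ := Metric.ball (0 : ℂ) 1

/-- The `k`-th Taylor coefficient of `f` at the origin. -/
def tcoeff (f : ℂ → ℂ) (k : ℕ) : ℂ := iteratedDeriv k f 0 / (k.factorial : ℂ)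

/-- Membership in the weighted Bergman space `A_α`: `f` is analytic on the unit disc and
its Taylor coefficients satisfy `Σ |a_k|² (k+1)^α < ∞`. -/
def MemA (α : ℝ) (f : ℂ → ℂ) : Prop :=
  AnalyticOnNhd ℂ f unitDisc ∧
    Summable (fun k : ℕ => ‖tcoeff f k‖ ^ 2 * ((k : ℝ) + 1) ^ α)

/-- The `A_α` norm `(Σ |a_k|² (k+1)^α)^{1/2}`. -/
def normA (α : ℝ) (f : ℂ → ℂ) : ℝ :=
  Real.sqrt (∑' k : ℕ, ‖tcoeff f k‖ ^ 2 * ((k : ℝ) + 1) ^ α)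

/-- The `A_α` inner product `Σ a_k conj(b_k) (k+1)^α`. -/
def innerA (α : ℝ) (f g : ℂ → ℂ) : ℂ :=
  ∑' k : ℕ, tcoeff f k * (starRingEnd ℂ) (tcoeff g k) * ((((k : ℝ) + 1) ^ α : ℝ) : ℂ)

/-- `B` is a finite Blaschke product of degree `n` (as a function on the unit disc). -/
def IsFiniteBlaschke (n : ℕ) (B : ℂ → ℂ) : Prop :=
  ∃ (θ : ℝ) (a : Fin n → ℂ), (∀ i, a i ∈ unitDisc) ∧
    ∀ z ∈ unitDisc,
      B z = Complex.exp ((θ : ℂ) * Complex.I) *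
        ∏ i, (z - a i) / (1 - (starRingEnd ℂ) (a i) * z)

/-- Membership in the model space `K_B = H² ⊖ BH²` (here `H² = A_0`). -/
def MemKB (B u : ℂ → ℂ) : Prop :=
  MemA 0 u ∧ ∀ g : ℂ → ℂ, MemA 0 g → innerA 0 u (B * g) = 0

/-- `u 0, …, u (n-1)` is an algebraic basis of the model space `K_B`
(functions being identified when they agree on the unit disc). -/
def IsBasisKB (n : ℕ) (B : ℂ → ℂ) (u : Fin n → ℂ → ℂ) : Prop :=
  (∀ i, MemKB B (u i)) ∧
    (∀ c : Fin n → ℂ, Set.EqOn (∑ i, c i • u i) 0 unitDisc → c = 0) ∧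
    (∀ v, MemKB B v → ∃ c : Fin n → ℂ, Set.EqOn v (∑ i, c i • u i) unitDisc)

/-- Membership in the multiplier algebra `M_α` of `A_α`. -/
def MemMult (α : ℝ) (φ : ℂ → ℂ) : Prop :=
  AnalyticOnNhd ℂ φ unitDisc ∧ ∀ f, MemA α f → MemA α (φ * f)

/-- Membership in `H^∞`: bounded and analytic on the unit disc. -/
def MemHinf (φ : ℂ → ℂ) : Prop :=
  AnalyticOnNhd ℂ φ unitDisc ∧ ∃ C : ℝ, ∀ z ∈ unitDisc, ‖φ z‖ ≤ C

/-- `W` is (the action of) a bounded linear operator on `A_α`. -/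
def IsBddOpA (α : ℝ) (W : (ℂ → ℂ) →ₗ[ℂ] (ℂ → ℂ)) : Prop :=
  (∀ f, MemA α f → MemA α (W f)) ∧
    ∃ C : ℝ, ∀ f, MemA α f → normA α (W f) ≤ C * normA α f

/-- Multiplication by the independent variable `z`. -/
def mulz (f : ℂ → ℂ) : ℂ → ℂ := fun z => z * f z

/-- The monomial `z ^ k`. -/
def monZ (k : ℕ) : ℂ → ℂ := fun z => z ^ k

/-- The mean `(1/2π) ∫_0^{2π} |f(r e^{iθ})|^p dθ`. -/
def hpMean (p : ℝ) (f : ℂ → ℂ) (r : ℝ) : ℝ :=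
  (∫ θ in (0:ℝ)..(2 * Real.pi), ‖f ((r : ℂ) * Complex.exp ((θ : ℂ) * Complex.I))‖ ^ p) /
    (2 * Real.pi)

/-- Membership in the Hardy space `H^p`. -/
def MemHp (p : ℝ) (f : ℂ → ℂ) : Prop :=
  AnalyticOnNhd ℂ f unitDisc ∧ BddAbove (hpMean p f '' Set.Ico (0 : ℝ) 1)

/-- The `H^p` norm. -/
def normHp (p : ℝ) (f : ℂ → ℂ) : ℝ :=
  (sSup (hpMean p f '' Set.Ico (0 : ℝ) 1)) ^ (1 / p)

/-- `W` is (the action of) a bounded linear operator on `H^p`. -/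
def IsBddOpHp (p : ℝ) (W : (ℂ → ℂ) →ₗ[ℂ] (ℂ → ℂ)) : Prop :=
  (∀ f, MemHp p f → MemHp p (W f)) ∧
    ∃ C : ℝ, ∀ f, MemHp p f → normHp p (W f) ≤ C * normHp p f

/-- The Szegő reproducing kernel of `H²` at `a`. -/
def szego (a : ℂ) : ℂ → ℂ := fun z => 1 / (1 - (starRingEnd ℂ) a * z)

/-- The map `J(f_1, …, f_n) = Σ_j u_j · (f_j ∘ B)`. -/
def Jmap (n : ℕ) (u : Fin n → ℂ → ℂ) (B : ℂ → ℂ) (F : Fin n → ℂ → ℂ) : ℂ → ℂ :=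
  fun z => ∑ j, u j z * F j (B z)

/-- The `ℓ²` direct sum norm on `(A_α)^n`. -/
def tupleNormA (α : ℝ) (n : ℕ) (F : Fin n → ℂ → ℂ) : ℝ :=
  Real.sqrt (∑ j, (normA α (F j)) ^ 2)

/-- The Blaschke product `((z - a)/(1 - conj a · z))^N`. -/
def mobiusB (a : ℂ) (N : ℕ) : ℂ → ℂ :=
  fun z => ((z - a) / (1 - (starRingEnd ℂ) a * z)) ^ N

/-- The function `z / (1 - conj a · z)²` (a normalized Bergman kernel-type function). -/
def bergKernelFn (a : ℂ) : ℂ → ℂ := fun z => z / (1 - (starRingEnd ℂ) a * z) ^ 2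

/-!
Take for `M` the closure in `A_{-1}` of the range of `T_B`. It is a closed subspace containing
`B`, and it is hyperinvariant because an operator `W` commuting with `T_B` sends `B g` to
`B (W g)`. It is proper: evaluation at a point `z` of the disc is bounded on `A_{-1}`, being the
`ℓ²` pairing of the weighted coefficients `a_k / √(k+1)` with `(√(k+1) z^k)_k`, so every element
of `M` vanishes at a zero of `B`, while the constant `1` does not.
-/

open scoped ENNReal InnerProductSpace Topology

lemma tcoeff_congr {f g : ℂ → ℂ} (h : Set.EqOn f g unitDisc) (k : ℕ) :
    tcoeff f k = tcoeff g k := by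
  rw [tcoeff, tcoeff, h.iteratedDeriv_of_isOpen isOpen_ball k (mem_ball_self one_pos)]

lemma tcoeff_add {f g : ℂ → ℂ} (hf : AnalyticAt ℂ f 0) (hg : AnalyticAt ℂ g 0) (k : ℕ) :
    tcoeff (f + g) k = tcoeff f k + tcoeff g k := by
  rw [tcoeff, iteratedDeriv_add hf.contDiffAt hg.contDiffAt, add_div, tcoeff, tcoeff]

lemma tcoeff_smul (c : ℂ) (f : ℂ → ℂ) (k : ℕ) : tcoeff (c • f) k = c * tcoeff f k := by
  simp only [tcoeff, iteratedDeriv_const_smul_field, smul_eq_mul, mul_div_assoc]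

lemma tcoeff_const (c : ℂ) (k : ℕ) : tcoeff (fun _ => c) k = if k = 0 then c else 0 := by
  rw [tcoeff, iteratedDeriv_const]
  split_ifs with hk <;> simp [hk]

lemma hasSum_tcoeff_mul_pow {f : ℂ → ℂ} {r : ℝ} (hf : DifferentiableOn ℂ f (ball 0 r)) {z : ℂ}
    (hz : z ∈ ball (0 : ℂ) r) : HasSum (fun k => tcoeff f k * z ^ k) (f z) := by
  have hterm : (fun k => tcoeff f k * z ^ k)
      = fun k : ℕ => (k.factorial : ℂ)⁻¹ • (z - 0) ^ k • iteratedDeriv k f 0 := by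
    ext k
    simp only [tcoeff, smul_eq_mul, sub_zero]
    ring
  exact hterm ▸ Complex.hasSum_taylorSeries_on_ball hf hz

lemma summable_rpow_mul_geometric (β : ℝ) {q : ℝ} (hq0 : 0 ≤ q) (hq1 : q < 1) :
    Summable fun k : ℕ => ((k : ℝ) + 1) ^ β * q ^ k := by
  rcases hq0.eq_or_lt with rfl | hq
  · exact summable_of_ne_finset_zero (s := {0}) fun k hk => by simp_all
  refine summable_of_ratio_test_tendsto_lt_one hq1 (.of_forall fun k => by positivity) ?_
  have hratio : Tendsto (fun k : ℕ => (1 + 1 / ((k : ℝ) + 1)) ^ β * q) atTop (𝓝 q) := by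
    simpa using ((tendsto_one_div_add_atTop_nhds_zero_nat.const_add 1).rpow_const
      (.inl (by norm_num))).mul_const q
  refine hratio.congr fun k => ?_
  have hk : (0 : ℝ) < (k : ℝ) + 1 := by positivity
  rw [Real.norm_of_nonneg (by positivity), Real.norm_of_nonneg (by positivity), Nat.cast_succ,
    pow_succ, one_add_div hk.ne', add_assoc, one_add_one_eq_two,
    Real.div_rpow (by positivity) hk.le]
  field_simp

section WeightedCoefficients

variable {α : ℝ} {f g h : ℂ → ℂ}

def weightedCoeff (α : ℝ) (f : ℂ → ℂ) (k : ℕ) : ℂ :=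
  (√(((k : ℝ) + 1) ^ α) : ℂ) * tcoeff f k

lemma norm_weightedCoeff_sq (α : ℝ) (f : ℂ → ℂ) (k : ℕ) :
    ‖weightedCoeff α f k‖ ^ 2 = ‖tcoeff f k‖ ^ 2 * ((k : ℝ) + 1) ^ α := by
  rw [weightedCoeff, norm_mul, mul_pow, Complex.norm_real, Real.norm_of_nonneg (Real.sqrt_nonneg _),
    Real.sq_sqrt (by positivity), mul_comm]

lemma memA_iff : MemA α f ↔ AnalyticOnNhd ℂ f unitDisc ∧ Memℓp (weightedCoeff α f) 2 := by
  simp only [MemA, memℓp_gen_iff (by norm_num : 0 < (2 : ℝ≥0∞).toReal), ENNReal.toReal_ofNat,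
    Real.rpow_two, norm_weightedCoeff_sq]

lemma weightedCoeff_add (hf : AnalyticAt ℂ f 0) (hg : AnalyticAt ℂ g 0) :
    weightedCoeff α (f + g) = weightedCoeff α f + weightedCoeff α g := by
  ext k
  simp only [weightedCoeff, tcoeff_add hf hg, Pi.add_apply, mul_add]

lemma weightedCoeff_smul (α : ℝ) (c : ℂ) (f : ℂ → ℂ) :
    weightedCoeff α (c • f) = c • weightedCoeff α f := by
  ext k
  simp only [weightedCoeff, tcoeff_smul, Pi.smul_apply, smul_eq_mul]
  ring

lemma MemA.add (hf : MemA α f) (hg : MemA α g) : MemA α (f + g) := by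
  rw [memA_iff] at *
  refine ⟨hf.1.add hg.1, ?_⟩
  rw [weightedCoeff_add (hf.1 0 (mem_ball_self one_pos)) (hg.1 0 (mem_ball_self one_pos))]
  exact hf.2.add hg.2

lemma MemA.smul (hf : MemA α f) (c : ℂ) : MemA α (c • f) := by
  rw [memA_iff] at *
  exact ⟨hf.1.const_smul, weightedCoeff_smul α c f ▸ hf.2.const_smul c⟩

lemma MemA.sub (hf : MemA α f) (hg : MemA α g) : MemA α (f - g) := by
  simpa [sub_eq_add_neg] using hf.add (hg.smul (-1))

lemma MemA.congr (hf : MemA α f) (h : Set.EqOn f g unitDisc) : MemA α g :=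
  ⟨hf.1.congr isOpen_ball h, by simpa only [tcoeff_congr h] using hf.2⟩

lemma memA_const (α : ℝ) (c : ℂ) : MemA α (fun _ => c) := by
  refine ⟨fun _ _ => analyticAt_const, summable_of_ne_finset_zero (s := {0}) fun k hk => ?_⟩
  simp_all [tcoeff_const]

def MemA.toLp (hf : MemA α f) : lp (fun _ : ℕ => ℂ) 2 :=
  ⟨weightedCoeff α f, (memA_iff.1 hf).2⟩

lemma normA_eq_norm_toLp (hf : MemA α f) : normA α f = ‖hf.toLp‖ := by
  rw [lp.norm_eq_tsum_rpow (by norm_num), normA, Real.sqrt_eq_rpow]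
  simp only [ENNReal.toReal_ofNat, Real.rpow_two, one_div]
  congr 1
  exact tsum_congr fun k => (norm_weightedCoeff_sq α f k).symm

lemma normA_add_le (hf : MemA α f) (hg : MemA α g) :
    normA α (f + g) ≤ normA α f + normA α g := by
  have : (hf.add hg).toLp = hf.toLp + hg.toLp := Subtype.ext <|
    weightedCoeff_add (hf.1 0 (mem_ball_self one_pos)) (hg.1 0 (mem_ball_self one_pos))
  rw [normA_eq_norm_toLp (hf.add hg), normA_eq_norm_toLp hf, normA_eq_norm_toLp hg, this]
  exact norm_add_le _ _

lemma normA_nonneg (α : ℝ) (f : ℂ → ℂ) : 0 ≤ normA α f := Real.sqrt_nonneg _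

lemma normA_smul (α : ℝ) (c : ℂ) (f : ℂ → ℂ) : normA α (c • f) = ‖c‖ * normA α f := by
  simp only [normA, tcoeff_smul, norm_mul, mul_pow, mul_assoc, tsum_mul_left]
  rw [Real.sqrt_mul (by positivity), Real.sqrt_sq (norm_nonneg c)]

lemma normA_zero (α : ℝ) : normA α 0 = 0 := by
  simpa using normA_smul α 0 0

lemma normA_congr (h : Set.EqOn f g unitDisc) : normA α f = normA α g := by
  simp only [normA, tcoeff_congr h]

lemma normA_sub_le (hf : MemA α f) (hg : MemA α g) (hh : MemA α h) :
    normA α (f - h) ≤ normA α (f - g) + normA α (g - h) := by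
  simpa using normA_add_le (hf.sub hg) (hg.sub hh)

end WeightedCoefficients

lemma exists_norm_apply_le_mul_normA (α : ℝ) {z : ℂ} (hz : z ∈ unitDisc) :
    ∃ C : ℝ, ∀ f, MemA α f → ‖f z‖ ≤ C * normA α f := by
  have hz1 : ‖z‖ < 1 := mem_ball_zero_iff.1 hz
  have hv : Memℓp (fun k : ℕ => starRingEnd ℂ z ^ k / (√(((k : ℝ) + 1) ^ α) : ℂ)) 2 := by
    rw [memℓp_gen_iff (by norm_num)]
    refine (summable_rpow_mul_geometric (-α) (sq_nonneg ‖z‖) (by nlinarith [norm_nonneg z])).congr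
      fun k => ?_
    simp only [ENNReal.toReal_ofNat, Real.rpow_two, norm_div, norm_pow, RCLike.norm_conj,
      Complex.norm_real, Real.norm_of_nonneg (Real.sqrt_nonneg _), div_pow,
      Real.sq_sqrt (by positivity : (0 : ℝ) ≤ ((k : ℝ) + 1) ^ α),
      Real.rpow_neg (by positivity : (0 : ℝ) ≤ (k : ℝ) + 1)]
    ring
  refine ⟨‖(⟨_, hv⟩ : lp (fun _ : ℕ => ℂ) 2)‖, fun f hf => ?_⟩
  have heval : f z = ⟪(⟨_, hv⟩ : lp (fun _ : ℕ => ℂ) 2), hf.toLp⟫_ℂ := by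
    rw [lp.inner_eq_tsum, ← (hasSum_tcoeff_mul_pow hf.1.differentiableOn hz).tsum_eq]
    refine tsum_congr fun k => ?_
    have hw : (√(((k : ℝ) + 1) ^ α) : ℂ) ≠ 0 :=
      Complex.ofReal_ne_zero.2 (Real.sqrt_pos.2 (by positivity)).ne'
    simp only [MemA.toLp, weightedCoeff, RCLike.inner_apply, map_div₀, map_pow,
      Complex.conj_conj, Complex.conj_ofReal]
    field_simp
  rw [heval, normA_eq_norm_toLp hf]
  exact norm_inner_le_norm _ _

lemma memA_of_differentiableOn_ball (α : ℝ) {f : ℂ → ℂ} {r : ℝ} (hr : 1 < r)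
    (hf : DifferentiableOn ℂ f (ball 0 r)) : MemA α f := by
  obtain ⟨s, hs1, hsr⟩ := exists_between hr
  have hs0 : 0 < s := one_pos.trans hs1
  have hsum : Summable fun k => ‖tcoeff f k‖ * s ^ k := by
    have := (hasSum_tcoeff_mul_pow hf (z := s) (by simpa [abs_of_pos hs0] using hsr)).summable
    simpa [Complex.norm_real, abs_of_pos hs0] using this.norm
  set C := ∑' k, ‖tcoeff f k‖ * s ^ k
  have hcoeff : ∀ k, ‖tcoeff f k‖ ≤ C * (s⁻¹) ^ k := fun k => by
    rw [inv_pow, ← div_eq_mul_inv, le_div_iff₀ (by positivity)]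
    exact hsum.le_tsum k fun j _ => by positivity
  refine ⟨(hf.analyticOnNhd isOpen_ball).mono (ball_subset_ball hr.le), ?_⟩
  refine .of_nonneg_of_le (fun k => by positivity) (fun k => ?_)
    ((summable_rpow_mul_geometric α (sq_nonneg s⁻¹) ?_).mul_left (C ^ 2))
  · calc ‖tcoeff f k‖ ^ 2 * ((k : ℝ) + 1) ^ α ≤ (C * (s⁻¹) ^ k) ^ 2 * ((k : ℝ) + 1) ^ α := by
          gcongr; exact hcoeff k
      _ = C ^ 2 * (((k : ℝ) + 1) ^ α * (s⁻¹ ^ 2) ^ k) := by ring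
  · have : s⁻¹ < 1 := inv_lt_one_of_one_lt₀ hs1
    nlinarith [inv_pos.2 hs0]

section NormClosure

variable {α : ℝ} {S : Set (ℂ → ℂ)} {f : ℂ → ℂ}

def normClosureA (α : ℝ) (S : Set (ℂ → ℂ)) : Set (ℂ → ℂ) :=
  {f | MemA α f ∧ ∀ ε > 0, ∃ g ∈ S, normA α (f - g) < ε}

lemma subset_normClosureA (hS : ∀ g ∈ S, MemA α g) : S ⊆ normClosureA α S :=
  fun g hg => ⟨hS g hg, fun ε hε => ⟨g, hg, by rwa [sub_self, normA_zero]⟩⟩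

lemma exists_mul_normA_sub_lt (hf : f ∈ normClosureA α S) (C : ℝ) {ε : ℝ} (hε : 0 < ε) :
    ∃ g ∈ S, C * normA α (f - g) < ε := by
  obtain ⟨g, hg, hfg⟩ := hf.2 (ε / (|C| + 1)) (by positivity)
  refine ⟨g, hg, ?_⟩
  calc C * normA α (f - g) ≤ |C| * normA α (f - g) :=
        mul_le_mul_of_nonneg_right (le_abs_self C) (normA_nonneg α _)
    _ ≤ |C| * (ε / (|C| + 1)) := by gcongr
    _ < ε := by
      rw [mul_div_assoc', div_lt_iff₀ (by positivity)]
      nlinarith [abs_nonneg C]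

lemma normClosureA_add (hS : ∀ g ∈ S, MemA α g) (hadd : ∀ f ∈ S, ∀ g ∈ S, f + g ∈ S)
    {f' : ℂ → ℂ} (hf : f ∈ normClosureA α S) (hf' : f' ∈ normClosureA α S) :
    f + f' ∈ normClosureA α S := by
  refine ⟨hf.1.add hf'.1, fun ε hε => ?_⟩
  obtain ⟨g, hg, hfg⟩ := hf.2 (ε / 2) (half_pos hε)
  obtain ⟨g', hg', hfg'⟩ := hf'.2 (ε / 2) (half_pos hε)
  refine ⟨g + g', hadd g hg g' hg', ?_⟩
  calc normA α (f + f' - (g + g')) = normA α ((f - g) + (f' - g')) := by rw [add_sub_add_comm]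
    _ ≤ normA α (f - g) + normA α (f' - g') :=
      normA_add_le (hf.1.sub (hS g hg)) (hf'.1.sub (hS g' hg'))
    _ < ε := by linarith

lemma normClosureA_smul (hsmul : ∀ c : ℂ, ∀ g ∈ S, c • g ∈ S) (c : ℂ)
    (hf : f ∈ normClosureA α S) : c • f ∈ normClosureA α S := by
  refine ⟨hf.1.smul c, fun ε hε => ?_⟩
  obtain ⟨g, hg, hfg⟩ := exists_mul_normA_sub_lt hf ‖c‖ hε
  exact ⟨c • g, hsmul c g hg, by rwa [← smul_sub, normA_smul]⟩

lemma mem_normClosureA_of_forall_approx (hS : ∀ g ∈ S, MemA α g) (hf : MemA α f)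
    (happrox : ∀ ε > 0, ∃ g ∈ normClosureA α S, normA α (f - g) < ε) :
    f ∈ normClosureA α S := by
  refine ⟨hf, fun ε hε => ?_⟩
  obtain ⟨g, hg, hfg⟩ := happrox (ε / 2) (half_pos hε)
  obtain ⟨g', hg', hgg'⟩ := hg.2 (ε / 2) (half_pos hε)
  exact ⟨g', hg', by linarith [normA_sub_le hf hg.1 (hS g' hg')]⟩

lemma normClosureA_mapsTo (hS : ∀ g ∈ S, MemA α g) {W : (ℂ → ℂ) →ₗ[ℂ] (ℂ → ℂ)}
    (hW : IsBddOpA α W) (hWS : ∀ g ∈ S, ∃ g' ∈ S, Set.EqOn (W g) g' unitDisc)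
    (hf : f ∈ normClosureA α S) : W f ∈ normClosureA α S := by
  obtain ⟨hWmem, C, hWC⟩ := hW
  refine ⟨hWmem f hf.1, fun ε hε => ?_⟩
  obtain ⟨g, hg, hfg⟩ := exists_mul_normA_sub_lt hf C hε
  obtain ⟨g', hg', hWg⟩ := hWS g hg
  refine ⟨g', hg', ?_⟩
  calc normA α (W f - g') = normA α (W (f - g)) :=
        normA_congr fun z hz => by simp [hWg hz]
    _ ≤ C * normA α (f - g) := hWC _ (hf.1.sub (hS g hg))
    _ < ε := hfg

lemma apply_eq_zero_of_mem_normClosureA (hS : ∀ g ∈ S, MemA α g) {z : ℂ} (hz : z ∈ unitDisc)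
    (hSz : ∀ g ∈ S, g z = 0) (hf : f ∈ normClosureA α S) : f z = 0 := by
  obtain ⟨C, hC⟩ := exists_norm_apply_le_mul_normA α hz
  refine norm_le_zero_iff.1 (le_of_forall_pos_le_add fun ε hε => ?_)
  obtain ⟨g, hg, hfg⟩ := exists_mul_normA_sub_lt hf C hε
  have := hC _ (hf.1.sub (hS g hg))
  simp only [Pi.sub_apply, hSz g hg, sub_zero] at this
  linarith

end NormClosure

section RangeMul

variable {α : ℝ} {B : ℂ → ℂ}

def rangeMulA (α : ℝ) (B : ℂ → ℂ) : Set (ℂ → ℂ) :=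
  {f | MemA α f ∧ ∃ g, MemA α g ∧ f = B * g}

lemma zero_mem_rangeMulA : (0 : ℂ → ℂ) ∈ rangeMulA α B :=
  ⟨memA_const α 0, 0, memA_const α 0, (mul_zero B).symm⟩

lemma self_mem_rangeMulA (hB : MemA α B) : B ∈ rangeMulA α B :=
  ⟨hB, 1, memA_const α 1, (mul_one B).symm⟩

lemma rangeMulA_add : ∀ f ∈ rangeMulA α B, ∀ f' ∈ rangeMulA α B, f + f' ∈ rangeMulA α B := by
  rintro _ ⟨hf, g, hg, rfl⟩ _ ⟨hf', g', hg', rfl⟩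
  exact ⟨hf.add hf', g + g', hg.add hg', (mul_add B g g').symm⟩

lemma rangeMulA_smul : ∀ c : ℂ, ∀ f ∈ rangeMulA α B, c • f ∈ rangeMulA α B := by
  rintro c _ ⟨hf, g, hg, rfl⟩
  exact ⟨hf.smul c, c • g, hg.smul c, (mul_smul_comm c B g).symm⟩

lemma exists_eqOn_mem_rangeMulA {W : (ℂ → ℂ) →ₗ[ℂ] (ℂ → ℂ)} (hW : ∀ f, MemA α f → MemA α (W f))
    (hWB : ∀ f, MemA α f → Set.EqOn (W (B * f)) (B * W f) unitDisc) :
    ∀ f ∈ rangeMulA α B, ∃ f' ∈ rangeMulA α B, Set.EqOn (W f) f' unitDisc := by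
  rintro _ ⟨hf, g, hg, rfl⟩
  exact ⟨B * W g, ⟨(hW _ hf).congr (hWB g hg), W g, hW g hg, rfl⟩, hWB g hg⟩

lemma apply_eq_zero_of_mem_rangeMulA {z : ℂ} (hBz : B z = 0) :
    ∀ f ∈ rangeMulA α B, f z = 0 := by
  rintro _ ⟨-, g, -, rfl⟩
  simp [hBz]

end RangeMul

lemma one_sub_conj_mul_ne_zero {a z : ℂ} (ha : a ∈ unitDisc) (hz : ‖z‖ ≤ 1) :
    1 - starRingEnd ℂ a * z ≠ 0 := by
  refine sub_ne_zero.2 fun h => ?_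
  have : ‖starRingEnd ℂ a * z‖ < 1 := by
    rw [norm_mul, RCLike.norm_conj]
    exact (mul_le_of_le_one_right (norm_nonneg a) hz).trans_lt (mem_ball_zero_iff.1 ha)
  simp [← h] at this

namespace IsFiniteBlaschke

variable {n : ℕ} {B : ℂ → ℂ}

/-- The poles `1 / conj aᵢ` lie outside the closed disc, so `B` extends holomorphically past it. -/
lemma exists_differentiableOn_ball (hB : IsFiniteBlaschke n B) :
    ∃ r > 1, ∃ F : ℂ → ℂ, DifferentiableOn ℂ F (ball 0 r) ∧ Set.EqOn B F unitDisc := by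
  obtain ⟨θ, a, ha, hBeq⟩ := hB
  set U := ⋂ i, {z : ℂ | 1 - starRingEnd ℂ (a i) * z ≠ 0}
  have hU : IsOpen U := isOpen_iInter_of_finite fun i => isOpen_ne_fun (by fun_prop) (by fun_prop)
  have hdisc : closedBall (0 : ℂ) 1 ⊆ U := fun z hz => Set.mem_iInter.2 fun i =>
    one_sub_conj_mul_ne_zero (ha i) (mem_closedBall_zero_iff.1 hz)
  obtain ⟨δ, hδ, hδU⟩ := (isCompact_closedBall (0 : ℂ) 1).exists_thickening_subset_open hU hdisc
  rw [thickening_closedBall hδ zero_le_one] at hδU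
  refine ⟨δ + 1, by linarith, _, fun z hz => ?_, hBeq⟩
  have hz := Set.mem_iInter.1 (hδU hz)
  refine DifferentiableAt.differentiableWithinAt ?_
  exact (differentiableAt_const _).mul (DifferentiableAt.fun_finsetProd fun i _ =>
    (differentiableAt_id.sub (differentiableAt_const _)).div (by fun_prop) (hz i))

lemma memA (hB : IsFiniteBlaschke n B) (α : ℝ) : MemA α B := by
  obtain ⟨r, hr, F, hF, hBF⟩ := hB.exists_differentiableOn_ball
  exact (memA_of_differentiableOn_ball α hr hF).congr hBF.symm

lemma exists_eq_zero (hB : IsFiniteBlaschke n B) (hn : 0 < n) : ∃ a ∈ unitDisc, B a = 0 := by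
  obtain ⟨θ, a, ha, hBeq⟩ := hB
  refine ⟨a ⟨0, hn⟩, ha _, ?_⟩
  rw [hBeq _ (ha _), Finset.prod_eq_zero (Finset.mem_univ ⟨0, hn⟩) (by simp), mul_zero]

lemma exists_ne_zero (hB : IsFiniteBlaschke n B) : ∃ z ∈ unitDisc, B z ≠ 0 := by
  obtain ⟨θ, a, ha, hBeq⟩ := hB
  obtain ⟨z, hz, hza⟩ := (infinite_of_mem_nhds (0 : ℂ) (ball_mem_nhds 0 one_pos)
    : unitDisc.Infinite).exists_notMem_finset (Finset.univ.image a)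
  refine ⟨z, hz, ?_⟩
  rw [hBeq z hz]
  refine mul_ne_zero (Complex.exp_ne_zero _) (Finset.prod_ne_zero_iff.2 fun i _ => ?_)
  refine div_ne_zero (sub_ne_zero.2 fun h => hza ?_) (one_sub_conj_mul_ne_zero (ha i) ?_)
  · exact Finset.mem_image.2 ⟨i, Finset.mem_univ i, h.symm⟩
  · exact (mem_ball_zero_iff.1 hz).le

end IsFiniteBlaschke

/-- For every finite nonconstant Blaschke product `B`, the operator `T_B`
on the Bergman space `A_{−1}` has a nontrivial closed hyperinvariant subspace `M`: `M` is a
closed subspace, `M ≠ {0}`, `M ≠ A_{−1}`, and `M` is invariant under every bounded operator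
commuting with `T_B`. -/
theorem statement12 (n : ℕ) (hn : 1 ≤ n) (B : ℂ → ℂ) (hB : IsFiniteBlaschke n B) :
    ∃ M : Set (ℂ → ℂ),
      (∀ f ∈ M, MemA (-1) f) ∧
      (0 : ℂ → ℂ) ∈ M ∧
      (∀ f ∈ M, ∀ g ∈ M, f + g ∈ M) ∧
      (∀ c : ℂ, ∀ f ∈ M, c • f ∈ M) ∧
      (∀ f, MemA (-1) f → (∀ ε > 0, ∃ g ∈ M, normA (-1) (f - g) < ε) → f ∈ M) ∧
      (∃ f ∈ M, ∃ z ∈ unitDisc, f z ≠ 0) ∧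
      (∃ f, MemA (-1) f ∧ f ∉ M) ∧
      (∀ W : (ℂ → ℂ) →ₗ[ℂ] (ℂ → ℂ), IsBddOpA (-1) W →
        (∀ f, MemA (-1) f → Set.EqOn (W (B * f)) (B * W f) unitDisc) →
        ∀ f ∈ M, W f ∈ M) := by
  have hS : ∀ f ∈ rangeMulA (-1) B, MemA (-1) f := fun _ hf => hf.1
  obtain ⟨a, ha, hBa⟩ := hB.exists_eq_zero hn
  obtain ⟨z, hz, hBz⟩ := hB.exists_ne_zero
  refine ⟨normClosureA (-1) (rangeMulA (-1) B), fun f hf => hf.1,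
    subset_normClosureA hS zero_mem_rangeMulA,
    fun f hf g hg => normClosureA_add hS rangeMulA_add hf hg,
    fun c f hf => normClosureA_smul rangeMulA_smul c hf,
    fun f hf => mem_normClosureA_of_forall_approx hS hf,
    ⟨B, subset_normClosureA hS (self_mem_rangeMulA (hB.memA _)), z, hz, hBz⟩,
    ⟨1, memA_const _ 1, fun h1 => ?_⟩,
    fun W hW hWB f hf => normClosureA_mapsTo hS hW (exists_eqOn_mem_rangeMulA hW.1 hWB) hf⟩
  simpa using apply_eq_zero_of_mem_normClosureA hS ha (apply_eq_zero_of_mem_rangeMulA hBa) h1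

end
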